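/- Let $v_1, \dots, v_n$ and $v_1', \dots, v_n'$ be vectors in $\mathbb{R}^d$ with $\|v_i\| \le R$ for all $i$, differing in exactly one index. Then the sample covariance matrices $\hat{C} = \frac{1}{n}\sum_i v_i v_i^\top - \bar{v}\bar{v}^\top$ and $\hat{C}'$ (defined analogously) satisfy $\|\hat{C} - \hat{C}'\|_F \le 6R^2/n$, where $\|\cdot\|_F$ denotes the Frobenius norm. -/
import Mathlib


open Finset

/-- Frobenius norm of a real matrix. -/
noncomputable def frob {d : ℕ} (A : Matrix (Fin d) (Fin d) ℝ) : ℝ :=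
  Real.sqrt (∑ a, ∑ b, (A a b) ^ 2)

/-- Sample covariance matrix `(1/n) ∑ vᵢvᵢᵀ − v̄ v̄ᵀ`. -/
noncomputable def sampleCov {n d : ℕ} (v : Fin n → (Fin d → ℝ)) :
    Matrix (Fin d) (Fin d) ℝ := fun a b =>
  (1 / n : ℝ) * ∑ i, v i a * v i b -
    ((1 / n : ℝ) * ∑ i, v i a) * ((1 / n : ℝ) * ∑ i, v i b)

/-- Euclidean norm of a vector, via `WithLp`. -/
noncomputable def nu {d : ℕ} (x : Fin d → ℝ) : ℝ :=
  ‖(WithLp.linearEquiv 2 ℝ (Fin d → ℝ)).symm x‖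

lemma nu_eq {d : ℕ} (x : Fin d → ℝ) : Real.sqrt (∑ a, x a ^ 2) = nu x := by
  rw [nu, EuclideanSpace.norm_eq]; simp [sq_abs, WithLp.linearEquiv]

lemma nu_nonneg {d : ℕ} (x : Fin d → ℝ) : 0 ≤ nu x := norm_nonneg _

lemma nu_smul {d : ℕ} (c : ℝ) (x : Fin d → ℝ) : nu (c • x) = |c| * nu x := by
  simp [nu, norm_smul]

lemma nu_sub_le {d : ℕ} (x y : Fin d → ℝ) : nu (x - y) ≤ nu x + nu y := by
  simp only [nu, map_sub]; exact norm_sub_le _ _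

lemma nu_sum_le {n d : ℕ} (u : Fin n → Fin d → ℝ) : nu (∑ i, u i) ≤ ∑ i, nu (u i) := by
  simp only [nu, map_sum]; exact norm_sum_le _ _

/-- `frob` as a Euclidean norm on `Fin d × Fin d → ℝ`. -/
lemma frob_eq {d : ℕ} (A : Matrix (Fin d) (Fin d) ℝ) :
    frob A = ‖(WithLp.linearEquiv 2 ℝ (Fin d × Fin d → ℝ)).symm (fun p => A p.1 p.2)‖ := by
  rw [frob, EuclideanSpace.norm_eq]
  simp [sq_abs, WithLp.linearEquiv, Fintype.sum_prod_type]

lemma frob_sub_le {d : ℕ} (A B : Matrix (Fin d) (Fin d) ℝ) :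
    frob (A - B) ≤ frob A + frob B := by
  rw [frob_eq, frob_eq, frob_eq]
  have h : (fun p : Fin d × Fin d => (A - B) p.1 p.2)
      = (fun p : Fin d × Fin d => A p.1 p.2) - (fun p : Fin d × Fin d => B p.1 p.2) := rfl
  rw [h, map_sub]
  exact norm_sub_le _ _

/-- Outer product. -/
noncomputable def outer {d : ℕ} (x y : Fin d → ℝ) : Matrix (Fin d) (Fin d) ℝ :=
  fun a b => x a * y b

lemma frob_outer {d : ℕ} (x y : Fin d → ℝ) : frob (outer x y) = nu x * nu y := by
  rw [← nu_eq, ← nu_eq, frob]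
  have h : ∑ a, ∑ b, (outer x y a b) ^ 2 = (∑ a, x a ^ 2) * (∑ b, y b ^ 2) := by
    rw [Finset.sum_mul_sum]
    simp [outer, mul_pow]
  rw [h, Real.sqrt_mul (by positivity)]

theorem stmt2 {n d : ℕ} (hn : 0 < n) (R : ℝ)
    (v v' : Fin n → (Fin d → ℝ)) (j : Fin n)
    (hdiff : ∀ i, i ≠ j → v i = v' i)
    (hv : ∀ i, Real.sqrt (∑ a, (v i a) ^ 2) ≤ R)
    (hv' : ∀ i, Real.sqrt (∑ a, (v' i a) ^ 2) ≤ R) :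
    frob (sampleCov v - sampleCov v') ≤ 6 * R ^ 2 / n := by
  have hnR : (0:ℝ) < n := by exact_mod_cast hn
  have hR : 0 ≤ R := le_trans (Real.sqrt_nonneg _) (hv ⟨0, hn⟩)
  -- bounds on individual vectors
  have hnv : ∀ i, nu (v i) ≤ R := fun i => (nu_eq (v i)) ▸ hv i
  have hnv' : ∀ i, nu (v' i) ≤ R := fun i => (nu_eq (v' i)) ▸ hv' i
  -- means
  set m : Fin d → ℝ := fun a => (1 / n : ℝ) * ∑ i, v i a with hm
  set m' : Fin d → ℝ := fun a => (1 / n : ℝ) * ∑ i, v' i a with hm'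
  have hmean : ∀ (w : Fin n → Fin d → ℝ), (∀ i, nu (w i) ≤ R) →
      nu (fun a => (1 / n : ℝ) * ∑ i, w i a) ≤ R := by
    intro w hw
    have h1 : (fun a => (1 / n : ℝ) * ∑ i, w i a) = (1 / n : ℝ) • ∑ i, w i := by
      funext a; simp [Finset.sum_apply]
    rw [h1, nu_smul]
    have h2 : nu (∑ i, w i) ≤ ∑ i : Fin n, R :=
      le_trans (nu_sum_le w) (Finset.sum_le_sum fun i _ => hw i)
    simp only [Finset.sum_const, Finset.card_univ, Fintype.card_fin, nsmul_eq_mul] at h2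
    calc |(1:ℝ)/n| * nu (∑ i, w i) ≤ (1/n) * (n * R) := by
          apply mul_le_mul _ h2 (nu_nonneg _) (by positivity)
          rw [abs_of_nonneg (by positivity)]
      _ = R := by field_simp
  have hmR : nu m ≤ R := hmean v hnv
  have hm'R : nu m' ≤ R := hmean v' hnv'
  -- difference of means
  have hmd : m - m' = (1 / n : ℝ) • (v j - v' j) := by
    funext a
    have : ∑ i, v i a - ∑ i, v' i a = v j a - v' j a := by
      rw [← Finset.sum_sub_distrib]
      rw [Finset.sum_eq_single j (fun i _ hij => by rw [hdiff i hij]; ring)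
        (fun h => absurd (Finset.mem_univ j) h)]
    simp only [Pi.sub_apply, Pi.smul_apply, smul_eq_mul, hm, hm']
    rw [← mul_sub, this]
  have hmdR : nu (m - m') ≤ 2 * R / n := by
    rw [hmd, nu_smul, abs_of_nonneg (by positivity)]
    calc (1/n : ℝ) * nu (v j - v' j) ≤ (1/n) * (R + R) := by
          apply mul_le_mul_of_nonneg_left _ (by positivity)
          exact le_trans (nu_sub_le _ _) (add_le_add (hnv j) (hnv' j))
      _ = 2 * R / n := by ring
  -- decomposition of the difference of sample covariances
  have hD : sampleCov v - sampleCov v'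
      = outer ((1 / n : ℝ) • v j) (v j) - outer ((1 / n : ℝ) • v' j) (v' j)
        - outer m (m - m') - outer (m - m') m' := by
    funext a b
    have hsum : ∑ i, v i a * v i b - ∑ i, v' i a * v' i b = v j a * v j b - v' j a * v' j b := by
      rw [← Finset.sum_sub_distrib]
      rw [Finset.sum_eq_single j (fun i _ hij => by rw [hdiff i hij]; ring)
        (fun h => absurd (Finset.mem_univ j) h)]
    simp only [Matrix.sub_apply, sampleCov, outer, Pi.sub_apply, Pi.smul_apply, smul_eq_mul,
      hm, hm']
    have : (1/n : ℝ) * ∑ i, v i a * v i b - (1/n : ℝ) * ∑ i, v' i a * v' i b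
        = (1/n : ℝ) * (v j a * v j b - v' j a * v' j b) := by
      rw [← mul_sub, hsum]
    nlinarith [this]
  -- bound each term
  have b1 : frob (outer ((1 / n : ℝ) • v j) (v j)) ≤ R ^ 2 / n := by
    rw [frob_outer, nu_smul, abs_of_nonneg (by positivity : (0:ℝ) ≤ 1/n)]
    calc (1/n : ℝ) * nu (v j) * nu (v j) ≤ (1/n) * R * R := by
          apply mul_le_mul (mul_le_mul_of_nonneg_left (hnv j) (by positivity)) (hnv j)
            (nu_nonneg _) (by positivity)
      _ = R ^ 2 / n := by ring
  have b2 : frob (outer ((1 / n : ℝ) • v' j) (v' j)) ≤ R ^ 2 / n := by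
    rw [frob_outer, nu_smul, abs_of_nonneg (by positivity : (0:ℝ) ≤ 1/n)]
    calc (1/n : ℝ) * nu (v' j) * nu (v' j) ≤ (1/n) * R * R := by
          apply mul_le_mul (mul_le_mul_of_nonneg_left (hnv' j) (by positivity)) (hnv' j)
            (nu_nonneg _) (by positivity)
      _ = R ^ 2 / n := by ring
  have b3 : frob (outer m (m - m')) ≤ 2 * R ^ 2 / n := by
    rw [frob_outer]
    calc nu m * nu (m - m') ≤ R * (2 * R / n) :=
          mul_le_mul hmR hmdR (nu_nonneg _) hR
      _ = 2 * R ^ 2 / n := by ring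
  have b4 : frob (outer (m - m') m') ≤ 2 * R ^ 2 / n := by
    rw [frob_outer]
    calc nu (m - m') * nu m' ≤ (2 * R / n) * R :=
          mul_le_mul hmdR hm'R (nu_nonneg _) (by positivity)
      _ = 2 * R ^ 2 / n := by ring
  rw [hD]
  calc frob (outer ((1 / n : ℝ) • v j) (v j) - outer ((1 / n : ℝ) • v' j) (v' j)
        - outer m (m - m') - outer (m - m') m')
      ≤ frob (outer ((1 / n : ℝ) • v j) (v j) - outer ((1 / n : ℝ) • v' j) (v' j)
        - outer m (m - m')) + frob (outer (m - m') m') := frob_sub_le _ _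
    _ ≤ (frob (outer ((1 / n : ℝ) • v j) (v j) - outer ((1 / n : ℝ) • v' j) (v' j))
        + frob (outer m (m - m'))) + frob (outer (m - m') m') := by
          gcongr; exact frob_sub_le _ _
    _ ≤ ((frob (outer ((1 / n : ℝ) • v j) (v j)) + frob (outer ((1 / n : ℝ) • v' j) (v' j)))
        + frob (outer m (m - m'))) + frob (outer (m - m') m') := by
          gcongr; exact frob_sub_le _ _
    _ ≤ ((R ^ 2 / n + R ^ 2 / n) + 2 * R ^ 2 / n) + 2 * R ^ 2 / n := by
          gcongr
    _ = 6 * R ^ 2 / n := by ring
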